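/- Let f_i(x) = ρx + b_i (i = 1,…,N) be an equi-contractive IFS on ℝ with 0 = b_1 < b_2 < … < b_N = 1 − ρ, attractor E, and let μ be the self-similar measure associated with a positive probability vector (p_i)_{i=1}^N. Let ω ∈ 𝒜* be a finite word with letters ω_1,…,ω_m, write p_ω = p_{ω_1}⋯p_{ω_m}, and let I ⊆ ℝ be a Borel set with μ(I) > 0 and f_ω(E) ⊆ I. Let μ_I := μ(·|I) denote the conditional measure μ_I(B) = μ(B ∩ I)/μ(I). Then for every r ∈ (0,∞) and every n ≥ 1, e_{n,r}(μ_I)^r ≥ p_ω ρ^{mr} e_{n,r}(μ)^r; consequently, for every t > 0, Q̄_r^t(μ_I) ≥ p_ω ρ^{mr} Q̄_r^t(μ). -/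

import Mathlib

open MeasureTheory Filter Set
open scoped ENNReal Topology

/-- The `k`-th quantization error of order `r` for a measure on `ℝ`, raised to the power `r`. -/
noncomputable def quantErrPow (r : ℝ) (ν : Measure ℝ) (k : ℕ) : ℝ :=
  sInf {y | ∃ α : Finset ℝ, α.Nonempty ∧ α.card ≤ k ∧
    y = ∫ x, (Metric.infDist x (α : Set ℝ)) ^ r ∂ν}

/-- For a word `σ = σ₁…σₙ`, the composition `f_{σ₁} ∘ ⋯ ∘ f_{σₙ}`. -/
def iterMap {N : ℕ} (f : Fin N → ℝ → ℝ) : List (Fin N) → ℝ → ℝ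
  | [] => id
  | i :: σ => f i ∘ iterMap f σ

/-!
Iterating the self-similarity `μ = ∑ pᵢ μ ∘ fᵢ⁻¹` along `ω` gives `p_ω · μ ∘ f_ω⁻¹ ≤ μ`, and since
`μ` is carried by `E` and `f_ω(E) ⊆ I`, the left side is carried by `I`, so
`p_ω · μ ∘ f_ω⁻¹ ≤ μ|_I ≤ μ_I`. The `r`-th power of the quantization error is monotone in the
measure, homogeneous under scaling of the measure, and picks up the factor `ρ^{mr}` under push-forward
by the similarity `f_ω`; this is the first inequality, and the second follows by taking `limsup`.
That `μ` is carried by `E` is where `ρ < 1` enters: `infDist · E` contracts by `ρ` under every `fᵢ`,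
so `μ {t < infDist · E} ≤ μ {t < ρⁿ infDist · E} → 0`.
-/

open Metric
open scoped Pointwise

theorem Metric.infDist_affine_image {s : ℝ} (hs : 0 < s) (c x : ℝ) (B : Set ℝ) :
    infDist (s * x + c) ((fun y => s * y + c) '' B) = s * infDist x B := by
  have himage : (fun y => s * y + c) '' B = (· + c) '' (s • B) := by
    rw [← Set.image_smul, Set.image_image]; rfl
  rw [himage, show s * x + c = s • x + c from rfl, infDist_image (isometry_add_right c),
    infDist_smul₀ hs.ne', Real.norm_of_nonneg hs.le]

section Quantization

variable {r : ℝ} {ν ν' : Measure ℝ} {k : ℕ}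

theorem quantErrPow_le_integral {α : Finset ℝ} (hα : α.Nonempty) (hαk : α.card ≤ k) :
    quantErrPow r ν k ≤ ∫ x, infDist x (α : Set ℝ) ^ r ∂ν :=
  csInf_le ⟨0, by
    rintro _ ⟨β, -, -, rfl⟩
    exact integral_nonneg fun _ => Real.rpow_nonneg infDist_nonneg r⟩ ⟨α, hα, hαk, rfl⟩

theorem le_quantErrPow {c : ℝ} (hk : 1 ≤ k)
    (h : ∀ α : Finset ℝ, α.Nonempty → α.card ≤ k → c ≤ ∫ x, infDist x (α : Set ℝ) ^ r ∂ν) :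
    c ≤ quantErrPow r ν k :=
  le_csInf ⟨_, {0}, Finset.singleton_nonempty 0, by simpa using hk, rfl⟩
    (by rintro _ ⟨α, hα, hαk, rfl⟩; exact h α hα hαk)

theorem quantErrPow_mono (hk : 1 ≤ k) (hνν' : ν ≤ ν')
    (hint : ∀ α : Finset ℝ, Integrable (fun x => infDist x (α : Set ℝ) ^ r) ν') :
    quantErrPow r ν k ≤ quantErrPow r ν' k :=
  le_quantErrPow hk fun α hα hαk => (quantErrPow_le_integral hα hαk).trans <|
    integral_mono_measure hνν' (Eventually.of_forall fun _ => Real.rpow_nonneg infDist_nonneg r)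
      (hint α)

theorem quantErrPow_smul_measure (c : ℝ≥0∞) :
    quantErrPow r (c • ν) k = c.toReal * quantErrPow r ν k := by
  rw [quantErrPow, quantErrPow, ← smul_eq_mul, ← Real.sInf_smul_of_nonneg ENNReal.toReal_nonneg]
  congr 1
  ext y
  simp only [integral_smul_measure, smul_eq_mul, Set.mem_smul_set]
  constructor
  · rintro ⟨α, hα, hαk, rfl⟩; exact ⟨_, ⟨α, hα, hαk, rfl⟩, rfl⟩
  · rintro ⟨_, ⟨α, hα, hαk, rfl⟩, rfl⟩; exact ⟨α, hα, hαk, rfl⟩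

theorem rpow_mul_quantErrPow_le_map_affine {s : ℝ} (hs : 0 < s) (c : ℝ) (hk : 1 ≤ k) :
    s ^ r * quantErrPow r ν k ≤ quantErrPow r (ν.map fun x => s * x + c) k := by
  refine le_quantErrPow hk fun α hα hαk => ?_
  set β := α.image fun y => (y - c) / s
  have hβ : (fun y => s * y + c) '' (β : Set ℝ) = α := by
    rw [Finset.coe_image, Set.image_image]
    convert Set.image_id (α : Set ℝ) using 2 with y
    simp [mul_div_cancel₀ _ hs.ne']
  have hmeas : Measurable fun x => s * x + c := by fun_prop
  calc s ^ r * quantErrPow r ν k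
      ≤ s ^ r * ∫ x, infDist x (β : Set ℝ) ^ r ∂ν := by
        gcongr
        exact quantErrPow_le_integral (hα.image _) (Finset.card_image_le.trans hαk)
    _ = ∫ x, infDist (s * x + c) (α : Set ℝ) ^ r ∂ν := by
        rw [← integral_const_mul]
        simp only [← hβ, infDist_affine_image hs, Real.mul_rpow hs.le infDist_nonneg]
    _ = ∫ x, infDist x (α : Set ℝ) ^ r ∂ν.map fun x => s * x + c :=
        (integral_map hmeas.aemeasurable
          ((continuous_infDist_pt _).measurable.pow_const r).aestronglyMeasurable).symm

end Quantization

theorem Continuous.integrable_of_measure_compl_eq_zero {X : Type*} [TopologicalSpace X]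
    [T2Space X] [MeasurableSpace X] [OpensMeasurableSpace X] {μ : Measure X} [IsFiniteMeasure μ]
    {K : Set X} (hK : IsCompact K) (hμK : μ Kᶜ = 0) {g : X → ℝ} (hg : Continuous g) : Integrable g μ :=
  (hg.continuousOn.integrableOn_compact hK).integrable_of_ae_notMem_eq_zero <|
    (show ∀ᵐ x ∂μ, x ∈ K from mem_ae_iff.2 hμK).mono fun _ hx hx' => absurd hx hx'

theorem ENNReal.ofReal_mul_limsup_le {ι : Type*} {l : Filter ι} {u v : ι → ℝ} {c : ℝ}
    (hc : 0 ≤ c) (h : ∀ᶠ k in l, c * u k ≤ v k) :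
    ENNReal.ofReal c * l.limsup (fun k => ENNReal.ofReal (u k)) ≤
      l.limsup fun k => ENNReal.ofReal (v k) := by
  rw [← ENNReal.limsup_const_mul_of_ne_top ENNReal.ofReal_ne_top]
  exact limsup_le_limsup <| h.mono fun k hk =>
    (ENNReal.ofReal_mul hc).symm.trans_le (ENNReal.ofReal_le_ofReal hk)

section Invariant

variable {ι α : Type*} [Fintype ι] [MeasurableSpace α] {μ : Measure α} {w : ι → ℝ≥0∞}
  {f : ι → α → α}

theorem measure_le_of_preimage_subset (hw : ∑ i, w i ≤ 1) (hf : ∀ i, Measurable (f i))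
    (hμ : μ = ∑ i, w i • μ.map (f i)) {S T : Set α} (hS : MeasurableSet S)
    (hST : ∀ i, f i ⁻¹' S ⊆ T) : μ S ≤ μ T :=
  calc μ S = ∑ i, w i * μ (f i ⁻¹' S) := by
        conv_lhs => rw [hμ]
        simp only [Measure.coe_finsetSum, Finset.sum_apply, Measure.smul_apply, smul_eq_mul,
          Measure.map_apply (hf _) hS]
    _ ≤ ∑ i, w i * μ T := by gcongr with i; exact hST i
    _ = (∑ i, w i) * μ T := (Finset.sum_mul ..).symm
    _ ≤ μ T := mul_le_of_le_one_left' hw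

variable [IsFiniteMeasure μ] {g : α → ℝ} {ρ : ℝ}

theorem measure_lt_eq_zero_of_le_mul (hw : ∑ i, w i ≤ 1) (hf : ∀ i, Measurable (f i))
    (hμ : μ = ∑ i, w i • μ.map (f i)) (hg : Measurable g) (hρ0 : 0 ≤ ρ) (hρ1 : ρ < 1)
    (hgf : ∀ i x, g (f i x) ≤ ρ * g x) {t : ℝ} (ht : 0 < t) : μ {x | t < g x} = 0 := by
  set S : ℕ → Set α := fun n => {x | t < ρ ^ n * g x}
  have hS : ∀ n, MeasurableSet (S n) := fun n => measurableSet_lt measurable_const (hg.const_mul _)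
  have hmono : Monotone fun n => μ (S n) := monotone_nat_of_le_succ fun n =>
    measure_le_of_preimage_subset hw hf hμ (hS n) fun i x (hx : t < ρ ^ n * g (f i x)) =>
      show t < ρ ^ (n + 1) * g x by
        calc t < ρ ^ n * g (f i x) := hx
          _ ≤ ρ ^ n * (ρ * g x) := by gcongr; exact hgf i x
          _ = ρ ^ (n + 1) * g x := by ring
  have hanti : Antitone S := antitone_nat_of_succ_le fun n x (hx : t < ρ ^ (n + 1) * g x) =>
    show t < ρ ^ n * g x by
      rw [pow_succ, mul_comm _ ρ, mul_assoc] at hx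
      have hpos : 0 < ρ ^ n * g x := pos_of_mul_pos_right (ht.trans hx) hρ0
      exact hx.trans_le (mul_le_of_le_one_left hpos.le hρ1.le)
  have hempty : ⋂ n, S n = ∅ := by
    refine Set.iInter_eq_empty_iff.2 fun x => ?_
    have hlim : Tendsto (fun n => ρ ^ n * g x) atTop (𝓝 0) := by
      simpa using (tendsto_pow_atTop_nhds_zero_of_lt_one hρ0 hρ1).mul_const (g x)
    exact ((hlim.eventually (gt_mem_nhds ht)).exists).imp fun n hn => hn.not_gt
  have hlim := tendsto_measure_iInter_atTop (fun n => (hS n).nullMeasurableSet) hanti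
    ⟨0, measure_ne_top μ _⟩
  rw [hempty, measure_empty] at hlim
  simpa [S] using le_antisymm (hmono.ge_of_tendsto hlim 0) zero_le

theorem measure_pos_eq_zero_of_le_mul (hw : ∑ i, w i ≤ 1) (hf : ∀ i, Measurable (f i))
    (hμ : μ = ∑ i, w i • μ.map (f i)) (hg : Measurable g) (hρ0 : 0 ≤ ρ) (hρ1 : ρ < 1)
    (hgf : ∀ i x, g (f i x) ≤ ρ * g x) : μ {x | 0 < g x} = 0 := by
  have hunion : {x | 0 < g x} = ⋃ n : ℕ, {x | 1 / ((n : ℝ) + 1) < g x} := by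
    ext x
    simp only [Set.mem_iUnion, Set.mem_ofPred_eq]
    exact ⟨exists_nat_one_div_lt, fun ⟨n, hn⟩ => Nat.one_div_pos_of_nat.trans hn⟩
  rw [hunion, measure_iUnion_null_iff]
  exact fun n => measure_lt_eq_zero_of_le_mul hw hf hμ hg hρ0 hρ1 hgf (by positivity)

end Invariant

section IteratedFunctionSystem

variable {N : ℕ} {f : Fin N → ℝ → ℝ} {ρ : ℝ} {b : Fin N → ℝ}

theorem measurable_iterMap (hf : ∀ i, Measurable (f i)) :
    ∀ σ : List (Fin N), Measurable (iterMap f σ)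
  | [] => measurable_id
  | i :: σ => (hf i).comp (measurable_iterMap hf σ)

theorem iterMap_eq_affine (hf : ∀ i x, f i x = ρ * x + b i) :
    ∀ σ : List (Fin N), ∃ c, iterMap f σ = fun x => ρ ^ σ.length * x + c
  | [] => ⟨0, by ext x; simp [iterMap]⟩
  | i :: σ => by
    obtain ⟨c, hc⟩ := iterMap_eq_affine hf σ
    refine ⟨ρ * c + b i, funext fun x => ?_⟩
    simp only [iterMap, Function.comp_apply, hc, hf, List.length_cons, pow_succ]
    ring

theorem smul_map_iterMap_le (hf : ∀ i, Measurable (f i)) {p : Fin N → ℝ} (hp : ∀ i, 0 ≤ p i)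
    {μ : Measure ℝ} (hμ : μ = ∑ i, ENNReal.ofReal (p i) • μ.map (f i)) :
    ∀ σ : List (Fin N), ENNReal.ofReal (σ.map p).prod • μ.map (iterMap f σ) ≤ μ
  | [] => by simp [iterMap, Measure.map_id]
  | i :: σ =>
    calc ENNReal.ofReal ((i :: σ).map p).prod • μ.map (iterMap f (i :: σ))
        = ENNReal.ofReal (p i) •
            (ENNReal.ofReal (σ.map p).prod • μ.map (iterMap f σ)).map (f i) := by
          rw [Measure.map_smul, iterMap, ← Measure.map_map (hf i) (measurable_iterMap hf σ),
            smul_smul, ← ENNReal.ofReal_mul (hp i), List.map_cons, List.prod_cons]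
      _ ≤ ENNReal.ofReal (p i) • μ.map (f i) := by
          gcongr
          exacts [hf i, smul_map_iterMap_le hf hp hμ σ]
      _ ≤ μ := by
          conv_rhs => rw [hμ]
          exact Finset.single_le_sum (f := fun j => ENNReal.ofReal (p j) • μ.map (f j))
            (fun _ _ => Measure.zero_le _) (Finset.mem_univ i)

theorem measure_compl_attractor_eq_zero (hρ : ρ ∈ Ioo (0 : ℝ) 1)
    (hf : ∀ i x, f i x = ρ * x + b i) {E : Set ℝ} (hEc : IsClosed E) (hEne : E.Nonempty)
    (hE : E = ⋃ i, f i '' E) {p : Fin N → ℝ} (hp : ∀ i, 0 ≤ p i) (hp1 : ∑ i, p i = 1)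
    {μ : Measure ℝ} [IsFiniteMeasure μ] (hμ : μ = ∑ i, ENNReal.ofReal (p i) • μ.map (f i)) :
    μ Eᶜ = 0 := by
  have hfeq : ∀ i, f i = fun x => ρ * x + b i := fun i => funext (hf i)
  have hfm : ∀ i, Measurable (f i) := fun i => by rw [hfeq i]; fun_prop
  have hw : ∑ i, ENNReal.ofReal (p i) ≤ 1 := by
    rw [← ENNReal.ofReal_sum_of_nonneg fun i _ => hp i, hp1, ENNReal.ofReal_one]
  have hcontract : ∀ i x, infDist (f i x) E ≤ ρ * infDist x E := fun i x =>
    calc infDist (f i x) E ≤ infDist (f i x) (f i '' E) :=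
          infDist_le_infDist_of_subset ((subset_iUnion (fun j => f j '' E) i).trans hE.ge)
            (hEne.image _)
      _ = ρ * infDist x E := by rw [hfeq i]; exact infDist_affine_image hρ.1 _ _ _
  convert measure_pos_eq_zero_of_le_mul hw hfm hμ (continuous_infDist_pt E).measurable hρ.1.le
    hρ.2 hcontract using 2
  ext x
  exact hEc.notMem_iff_infDist_pos hEne

theorem smul_map_iterMap_le_smul_restrict (hf : ∀ i, Measurable (f i)) {p : Fin N → ℝ}
    (hp : ∀ i, 0 ≤ p i) {μ : Measure ℝ} [IsProbabilityMeasure μ]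
    (hμ : μ = ∑ i, ENNReal.ofReal (p i) • μ.map (f i)) {E : Set ℝ} (hμE : μ Eᶜ = 0)
    (ω : List (Fin N)) {I : Set ℝ} (hI : MeasurableSet I) (hIE : iterMap f ω '' E ⊆ I) :
    ENNReal.ofReal (ω.map p).prod • μ.map (iterMap f ω) ≤ (μ I)⁻¹ • μ.restrict I := by
  have hIc : μ.map (iterMap f ω) Iᶜ = 0 := by
    rw [Measure.map_apply (measurable_iterMap hf ω) hI.compl]
    exact measure_mono_null (fun x hx hxE => hx (hIE ⟨x, hxE, rfl⟩)) hμE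
  calc ENNReal.ofReal (ω.map p).prod • μ.map (iterMap f ω)
      = (ENNReal.ofReal (ω.map p).prod • μ.map (iterMap f ω)).restrict I := by
        rw [Measure.restrict_smul, Measure.restrict_eq_self_of_ae_mem (mem_ae_iff.2 hIc)]
    _ ≤ μ.restrict I := Measure.restrict_mono subset_rfl (smul_map_iterMap_le hf hp hμ ω)
    _ ≤ (μ I)⁻¹ • μ.restrict I := Measure.le_iff'.2 fun s => by
        rw [Measure.smul_apply, smul_eq_mul]
        exact le_mul_of_one_le_left' (ENNReal.one_le_inv.2 prob_le_one)

theorem prod_mul_rpow_mul_quantErrPow_le (hρ : 0 < ρ) (hf : ∀ i x, f i x = ρ * x + b i)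
    {E : Set ℝ} (hE : IsCompact E) {p : Fin N → ℝ} (hp : ∀ i, 0 ≤ p i) {μ : Measure ℝ}
    [IsProbabilityMeasure μ] (hμ : μ = ∑ i, ENNReal.ofReal (p i) • μ.map (f i))
    (hμE : μ Eᶜ = 0) (ω : List (Fin N)) {I : Set ℝ} (hI : MeasurableSet I) (hμI : μ I ≠ 0)
    (hIE : iterMap f ω '' E ⊆ I) {r : ℝ} (hr : 0 ≤ r) {k : ℕ} (hk : 1 ≤ k) :
    (ω.map p).prod * (ρ ^ ω.length) ^ r * quantErrPow r μ k ≤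
      quantErrPow r ((μ I)⁻¹ • μ.restrict I) k := by
  have hfm : ∀ i, Measurable (f i) := fun i => by rw [funext (hf i)]; fun_prop
  obtain ⟨c, hc⟩ := iterMap_eq_affine hf ω
  have hP : 0 ≤ (ω.map p).prod := List.prod_nonneg (by simpa using fun i _ => hp i)
  have := Measure.smul_finite (μ.restrict I) (ENNReal.inv_ne_top.2 hμI)
  have hμIE : ((μ I)⁻¹ • μ.restrict I) Eᶜ = 0 := by
    rw [Measure.smul_apply, smul_eq_mul,
      nonpos_iff_eq_zero.1 ((Measure.restrict_le_self Eᶜ).trans hμE.le), mul_zero]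
  have hint (α : Finset ℝ) :
      Integrable (fun x => infDist x (α : Set ℝ) ^ r) ((μ I)⁻¹ • μ.restrict I) :=
    ((continuous_infDist_pt _).rpow_const fun _ => Or.inr hr).integrable_of_measure_compl_eq_zero
      hE hμIE
  calc (ω.map p).prod * (ρ ^ ω.length) ^ r * quantErrPow r μ k
      ≤ (ω.map p).prod * quantErrPow r (μ.map (iterMap f ω)) k := by
        rw [mul_assoc, hc]
        gcongr
        exact rpow_mul_quantErrPow_le_map_affine (pow_pos hρ _) c hk
    _ = quantErrPow r (ENNReal.ofReal (ω.map p).prod • μ.map (iterMap f ω)) k := by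
        rw [quantErrPow_smul_measure, ENNReal.toReal_ofReal hP]
    _ ≤ quantErrPow r ((μ I)⁻¹ • μ.restrict I) k :=
        quantErrPow_mono hk (smul_map_iterMap_le_smul_restrict hfm hp hμ hμE ω hI hIE) hint

end IteratedFunctionSystem

theorem stmt7
    (N : ℕ) (ρ : ℝ) (hρ : ρ ∈ Set.Ioo (0 : ℝ) 1)
    (b : Fin N → ℝ)
    (f : Fin N → ℝ → ℝ) (hf : ∀ i x, f i x = ρ * x + b i)
    (E : Set ℝ) (hEcpt : IsCompact E) (hEne : E.Nonempty)
    (hE : E = ⋃ i, f i '' E)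
    (p : Fin N → ℝ) (hp : ∀ i, 0 < p i) (hp1 : ∑ i, p i = 1)
    (μ : Measure ℝ) [IsProbabilityMeasure μ]
    (hμ : μ = ∑ i, ENNReal.ofReal (p i) • μ.map (f i))
    (ω : List (Fin N))
    (I : Set ℝ) (hImeas : MeasurableSet I) (hIpos : 0 < μ I)
    (hIE : iterMap f ω '' E ⊆ I)
    (μI : Measure ℝ) (hμI : μI = (μ I)⁻¹ • μ.restrict I)
    (r : ℝ) (hr : 0 < r) :
    (∀ n : ℕ, 1 ≤ n →
      (ω.map p).prod * (ρ ^ ω.length) ^ r * quantErrPow r μ n ≤ quantErrPow r μI n) ∧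
    ∀ t : ℝ, 0 < t →
      ENNReal.ofReal ((ω.map p).prod * (ρ ^ ω.length) ^ r) *
          atTop.limsup (fun k : ℕ => ENNReal.ofReal ((k : ℝ) ^ (r / t) * quantErrPow r μ k)) ≤
        atTop.limsup (fun k : ℕ => ENNReal.ofReal ((k : ℝ) ^ (r / t) * quantErrPow r μI k)) := by
  have hp0 : ∀ i, 0 ≤ p i := fun i => (hp i).le
  have hμE : μ Eᶜ = 0 :=
    measure_compl_attractor_eq_zero hρ hf hEcpt.isClosed hEne hE hp0 hp1 hμ
  have hquant (n : ℕ) (hn : 1 ≤ n) :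
      (ω.map p).prod * (ρ ^ ω.length) ^ r * quantErrPow r μ n ≤ quantErrPow r μI n :=
    hμI ▸ prod_mul_rpow_mul_quantErrPow_le hρ.1 hf hEcpt hp0 hμ hμE ω hImeas hIpos.ne' hIE
      hr.le hn
  have hC : 0 ≤ (ω.map p).prod * (ρ ^ ω.length) ^ r :=
    mul_nonneg (List.prod_nonneg (by simpa using fun i _ => hp0 i))
      (Real.rpow_nonneg (pow_nonneg hρ.1.le _) r)
  refine ⟨hquant, fun t _ => ENNReal.ofReal_mul_limsup_le hC ?_⟩
  filter_upwards [eventually_ge_atTop 1] with k hk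
  rw [mul_left_comm]
  exact mul_le_mul_of_nonneg_left (hquant k hk) (by positivity)
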